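/- arXiv:0906.1697 — 9 statements merged into one kernel-verified Lean document; each statement's English description precedes it below -/
import Mathlib

section
/- Let α > 0 and s ≥ 0 be real numbers, and let ν be a real number. Suppose (A_{2n})_{n≥0} and (B_{2n})_{n≥1} are real sequences, each not identically zero, which decay exponentially (i.e., there exist C > 0 and 0 < r < 1 with |A_{2n}| ≤ C rⁿ and |B_{2n}| ≤ C rⁿ for all n) and which satisfy the recurrence relations: ν A_0 + 2α(s+1) A_2 = 0; 4α(s−1) A_0 + (ν−4) A_2 + 2α(s+3) A_4 = 0; 2α(s−2k+1) A_{2k−2} + (ν−4k²) A_{2k} + 2α(s+2k+1) A_{2k+2} = 0 for all k ≥ 2; (ν−4) B_2 + 2α(s+3) B_4 = 0; and 2α(s−2k+1) B_{2k−2} + (ν−4k²) B_{2k} + 2α(s+2k+1) B_{2k+2} = 0 for all k ≥ 2. Then s is an odd nonnegative integer. -/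
/-!
Both coefficient sequences, shifted by one index, solve the same three-term recurrence, so their
Casoratian (discrete Wronskian) `W` obeys the first-order recurrence
`(s + 2j + 5) W (j+1) = (s - 2j - 3) W j`. Its ratio tends to `-1`, so a nonzero `W` decays only
polynomially, while exponential decay of `A` and `B` forces `W` to decay exponentially. Hence
`W` vanishes from some index on, and, if `s` is not an odd integer, the coefficients
`s - 2j - 3` never vanish and propagate this back to `W 0 = 0`. The two initial relations then
give `4α(s - 1) · A 0 · B 1 = 0`, and the recurrence with its positive leading coefficient makes
`A` or `B` vanish identically.
-/

open Filter Topology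

section ThreeTermRecurrence

variable {K : Type*}

def SolvesThreeTerm [Ring K] (a b c : ℕ → K) (u : ℕ → K) : Prop :=
  ∀ j, a j * u j + b j * u (j + 1) + c j * u (j + 2) = 0

def casoratian [Ring K] (u v : ℕ → K) (j : ℕ) : K :=
  u j * v (j + 1) - u (j + 1) * v j

theorem SolvesThreeTerm.casoratian_succ [CommRing K] {a b c u v : ℕ → K}
    (hu : SolvesThreeTerm a b c u) (hv : SolvesThreeTerm a b c v) (j : ℕ) :
    c j * casoratian u v (j + 1) = a j * casoratian u v j := by
  unfold casoratian
  linear_combination u (j + 1) * hv j - v (j + 1) * hu j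

theorem SolvesThreeTerm.eq_zero [Ring K] [NoZeroDivisors K] {a b c u : ℕ → K}
    (hu : SolvesThreeTerm a b c u) (hc : ∀ j, c j ≠ 0) (h₀ : u 0 = 0) (h₁ : u 1 = 0) (n : ℕ) :
    u n = 0 := by
  suffices ∀ n, u n = 0 ∧ u (n + 1) = 0 from (this n).1
  intro n
  induction n with
  | zero => exact ⟨h₀, h₁⟩
  | succ n ih =>
    refine ⟨ih.2, ?_⟩
    have h := hu n
    rw [ih.1, ih.2, mul_zero, mul_zero, zero_add, zero_add] at h
    exact (mul_eq_zero.mp h).resolve_left (hc n)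

theorem apply_zero_eq_zero_of_mul_succ_eq [Ring K] [NoZeroDivisors K] {p q x : ℕ → K}
    (hp : ∀ j, p j ≠ 0) (hx : ∀ j, q j * x (j + 1) = p j * x j) {n : ℕ} (hn : x n = 0) :
    x 0 = 0 := by
  induction n with
  | zero => exact hn
  | succ n ih =>
    have h := hx n
    rw [hn, mul_zero, eq_comm] at h
    exact ih ((mul_eq_zero.mp h).resolve_left (hp n))

end ThreeTermRecurrence

theorem abs_casoratian_le {u v : ℕ → ℝ} {C r : ℝ} (hu : ∀ n, |u n| ≤ C * r ^ n)
    (hv : ∀ n, |v n| ≤ C * r ^ n) (j : ℕ) :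
    |casoratian u v j| ≤ 2 * C ^ 2 * r * (r ^ 2) ^ j := by
  have hnonneg : ∀ n, 0 ≤ C * r ^ n := fun n => (abs_nonneg _).trans (hu n)
  calc |casoratian u v j| ≤ |u j| * |v (j + 1)| + |u (j + 1)| * |v j| := by
        rw [casoratian, ← abs_mul, ← abs_mul]
        exact abs_sub _ _
    _ ≤ C * r ^ j * (C * r ^ (j + 1)) + C * r ^ (j + 1) * (C * r ^ j) := by
        exact add_le_add (mul_le_mul (hu j) (hv _) (abs_nonneg _) (hnonneg j))
          (mul_le_mul (hu _) (hv j) (abs_nonneg _) (hnonneg _))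
    _ = 2 * C ^ 2 * r * (r ^ 2) ^ j := by ring

theorem eq_zero_of_le_abs_succ_of_abs_le {x : ℕ → ℝ} {C r ρ : ℝ} (hr : 0 ≤ r) (hrρ : r < ρ)
    (hx : ∀ n, |x n| ≤ C * r ^ n) {N : ℕ} (hgrow : ∀ j ≥ N, ρ * |x j| ≤ |x (j + 1)|) :
    x N = 0 := by
  have hρ : 0 < ρ := hr.trans_lt hrρ
  have hlower : ∀ m, |x N| * ρ ^ m ≤ |x (N + m)| := by
    intro m
    induction m with
    | zero => simp
    | succ m ih =>
      calc |x N| * ρ ^ (m + 1) = ρ * (|x N| * ρ ^ m) := by ring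
        _ ≤ ρ * |x (N + m)| := by gcongr
        _ ≤ |x (N + m + 1)| := hgrow _ (Nat.le_add_right N m)
  have hbound : ∀ m, |x N| ≤ C * r ^ N * (r / ρ) ^ m := by
    intro m
    have h := (hlower m).trans (hx (N + m))
    rw [← le_div_iff₀ (pow_pos hρ m)] at h
    calc |x N| ≤ C * r ^ (N + m) / ρ ^ m := h
      _ = C * r ^ N * (r / ρ) ^ m := by rw [div_pow, pow_add]; ring
  have hlim : Tendsto (fun m => C * r ^ N * (r / ρ) ^ m) atTop (𝓝 0) := by
    simpa using (tendsto_pow_atTop_nhds_zero_of_lt_one (div_nonneg hr hρ.le)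
      ((div_lt_one hρ).mpr hrρ)).const_mul (C * r ^ N)
  exact abs_nonpos_iff.mp (ge_of_tendsto' hlim hbound)

theorem eventually_mul_le_abs_sub_of_lt_one (s ρ : ℝ) (hs : 0 ≤ s) (hρ : ρ < 1) :
    ∀ᶠ j : ℕ in atTop, ρ * (s + 2 * j + 5) ≤ |s - 2 * j - 3| := by
  filter_upwards [tendsto_natCast_atTop_atTop.eventually_ge_atTop ((s + 5) / (1 - ρ))]
    with j hj
  rw [div_le_iff₀ (sub_pos.mpr hρ)] at hj
  calc ρ * (s + 2 * j + 5) ≤ -(s - 2 * j - 3) := by nlinarith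
    _ ≤ |s - 2 * j - 3| := neg_le_abs _

section WhittakerHill

variable {α s ν : ℝ}

theorem solvesThreeTerm_of_whittakerHill {A : ℕ → ℝ}
    (hrec : ∀ k : ℕ, 2 ≤ k →
      2 * α * (s - 2 * (k : ℝ) + 1) * A (k - 1) + (ν - 4 * (k : ℝ) ^ 2) * A k
        + 2 * α * (s + 2 * (k : ℝ) + 1) * A (k + 1) = 0) :
    SolvesThreeTerm (fun j : ℕ => 2 * α * (s - 2 * j - 3)) (fun j : ℕ => ν - 4 * ((j : ℝ) + 2) ^ 2)
      (fun j : ℕ => 2 * α * (s + 2 * j + 5)) (fun n => A (n + 1)) := by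
  intro j
  have h := hrec (j + 2) (by omega)
  push_cast at h
  convert h using 3 <;> ring_nf

theorem casoratian_zero_eq_zero_of_whittakerHill {b u v : ℕ → ℝ} (hα : α ≠ 0) (hs : 0 ≤ s)
    (hodd : ∀ m : ℕ, s ≠ 2 * m + 1)
    (hu : SolvesThreeTerm (fun j : ℕ => 2 * α * (s - 2 * j - 3)) b
      (fun j : ℕ => 2 * α * (s + 2 * j + 5)) u)
    (hv : SolvesThreeTerm (fun j : ℕ => 2 * α * (s - 2 * j - 3)) b
      (fun j : ℕ => 2 * α * (s + 2 * j + 5)) v)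
    {C r : ℝ} (hr₀ : 0 ≤ r) (hr₁ : r < 1)
    (hu_le : ∀ n, |u n| ≤ C * r ^ n) (hv_le : ∀ n, |v n| ≤ C * r ^ n) :
    casoratian u v 0 = 0 := by
  have hrec : ∀ j : ℕ, (s + 2 * j + 5) * casoratian u v (j + 1) =
      (s - 2 * j - 3) * casoratian u v j := fun j =>
    mul_left_cancel₀ (mul_ne_zero two_ne_zero hα) (by linear_combination hu.casoratian_succ hv j)
  have hcoeff : ∀ j : ℕ, s - 2 * j - 3 ≠ 0 := fun j h => hodd (j + 1) (by push_cast; linarith)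
  obtain ⟨ρ, hr₂ρ, hρ⟩ := exists_between (pow_lt_one₀ hr₀ hr₁ two_ne_zero)
  obtain ⟨N, hN⟩ := eventually_atTop.mp (eventually_mul_le_abs_sub_of_lt_one s ρ hs hρ)
  have hgrow : ∀ j ≥ N, ρ * |casoratian u v j| ≤ |casoratian u v (j + 1)| := by
    intro j hj
    have hpos : 0 < s + 2 * j + 5 := by positivity
    have h := congrArg abs (hrec j)
    rw [abs_mul, abs_mul, abs_of_pos hpos] at h
    refine le_of_mul_le_mul_left ?_ hpos
    calc (s + 2 * j + 5) * (ρ * |casoratian u v j|)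
        = ρ * (s + 2 * j + 5) * |casoratian u v j| := by ring
      _ ≤ |s - 2 * j - 3| * |casoratian u v j| := by gcongr; exact hN j hj
      _ = _ := h.symm
  exact apply_zero_eq_zero_of_mul_succ_eq hcoeff hrec
    (eq_zero_of_le_abs_succ_of_abs_le (sq_nonneg r) hr₂ρ (abs_casoratian_le hu_le hv_le) hgrow)

end WhittakerHill

/-- If the Whittaker–Hill recurrences for the Fourier coefficients of a
nontrivial even π-periodic solution `(A n = A_{2n})_{n ≥ 0}` and a nontrivial odd
π-periodic solution `(B n = B_{2n})_{n ≥ 1}` both admit exponentially decaying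
solutions, then `s` is an odd nonnegative integer. -/
theorem whittaker_hill_coexistence_forces_odd_integer
    (α s ν : ℝ) (hα : 0 < α) (hs : 0 ≤ s)
    (A B : ℕ → ℝ)
    (hA_ne : ∃ n : ℕ, A n ≠ 0)
    (hB_ne : ∃ n : ℕ, 1 ≤ n ∧ B n ≠ 0)
    (hdecay : ∃ C : ℝ, 0 < C ∧ ∃ r : ℝ, 0 < r ∧ r < 1 ∧
      (∀ n : ℕ, |A n| ≤ C * r ^ n) ∧ (∀ n : ℕ, |B n| ≤ C * r ^ n))
    (hA0 : ν * A 0 + 2 * α * (s + 1) * A 1 = 0)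
    (hA1 : 4 * α * (s - 1) * A 0 + (ν - 4) * A 1 + 2 * α * (s + 3) * A 2 = 0)
    (hArec : ∀ k : ℕ, 2 ≤ k →
      2 * α * (s - 2 * (k : ℝ) + 1) * A (k - 1) + (ν - 4 * (k : ℝ) ^ 2) * A k
        + 2 * α * (s + 2 * (k : ℝ) + 1) * A (k + 1) = 0)
    (hB1 : (ν - 4) * B 1 + 2 * α * (s + 3) * B 2 = 0)
    (hBrec : ∀ k : ℕ, 2 ≤ k →
      2 * α * (s - 2 * (k : ℝ) + 1) * B (k - 1) + (ν - 4 * (k : ℝ) ^ 2) * B k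
        + 2 * α * (s + 2 * (k : ℝ) + 1) * B (k + 1) = 0) :
    ∃ m : ℕ, s = 2 * (m : ℝ) + 1 := by
  by_contra! hodd
  obtain ⟨C, -, r, hr₀, hr₁, hA_le, hB_le⟩ := hdecay
  have hu := solvesThreeTerm_of_whittakerHill hArec
  have hv := solvesThreeTerm_of_whittakerHill hBrec
  have hshift {X : ℕ → ℝ} (hX : ∀ n, |X n| ≤ C * r ^ n) (n : ℕ) : |X (n + 1)| ≤ C * r * r ^ n :=
    (hX (n + 1)).trans_eq (by ring)
  have hW := casoratian_zero_eq_zero_of_whittakerHill hα.ne' hs hodd hu hv hr₀.le hr₁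
    (hshift hA_le) (hshift hB_le)
  have hlead : ∀ j : ℕ, 2 * α * (s + 2 * j + 5) ≠ 0 := fun j => by positivity
  have hAB : A 0 * B 1 = 0 := by
    have h : 4 * α * (s - 1) * (A 0 * B 1) =
        2 * α * (s + 3) * casoratian (fun n => A (n + 1)) (fun n => B (n + 1)) 0 := by
      unfold casoratian
      linear_combination B 1 * hA1 - A 1 * hB1
    rw [hW, mul_zero] at h
    exact (mul_eq_zero.mp h).resolve_left
      (mul_ne_zero (by positivity) (sub_ne_zero.mpr (by simpa using hodd 0)))
  rcases mul_eq_zero.mp hAB with hA₀ | hB₁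
  · have hA₁ : A 1 = 0 := (mul_eq_zero.mp (by linear_combination hA0 - ν * hA₀ :
      2 * α * (s + 1) * A 1 = 0)).resolve_left (by positivity)
    have hA₂ : A 2 = 0 := (mul_eq_zero.mp (by
      linear_combination hA1 - 4 * α * (s - 1) * hA₀ - (ν - 4) * hA₁ :
      2 * α * (s + 3) * A 2 = 0)).resolve_left (by positivity)
    obtain ⟨n, hn⟩ := hA_ne
    cases n with
    | zero => exact hn hA₀
    | succ n => exact hn (hu.eq_zero hlead hA₁ hA₂ n)
  · have hB₂ : B 2 = 0 := (mul_eq_zero.mp (by linear_combination hB1 - (ν - 4) * hB₁ :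
      2 * α * (s + 3) * B 2 = 0)).resolve_left (by positivity)
    obtain ⟨n, hn, hBn⟩ := hB_ne
    obtain ⟨m, rfl⟩ := Nat.exists_eq_add_of_le' hn
    exact hBn (hv.eq_zero hlead hB₁ hB₂ m)
end

section
/- Let m ≥ 0 be an integer, s = 2m+1, α > 0, and ν a real number. Set b_k = ν − 4k², c_k = 2α(s+2k+1) for k ≥ 0, a_1 = 4α(s−1), and a_k = 2α(s−2k+1) for k ≥ 2. Let K⁰_m be the (m+1)×(m+1) tridiagonal matrix with diagonal entries b_0, …, b_m, superdiagonal c_0, …, c_{m−1} and subdiagonal a_1, …, a_m, and let K¹_m be the m×m tridiagonal matrix with diagonal b_1, …, b_m, superdiagonal c_1, …, c_{m−1} and subdiagonal a_2, …, a_m. Assume det K⁰_m ≠ 0 and det K¹_m ≠ 0. If (A_{2n})_{n≥0} is a real sequence, not identically zero, decaying exponentially, and satisfying ν A_0 + 2α(s+1) A_2 = 0, 4α(s−1) A_0 + (ν−4) A_2 + 2α(s+3) A_4 = 0, and 2α(s−2k+1) A_{2k−2} + (ν−4k²) A_{2k} + 2α(s+2k+1) A_{2k+2} = 0 for all k ≥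 2, then there exists a real sequence (B_{2n})_{n≥1}, not identically zero, decaying exponentially, satisfying (ν−4) B_2 + 2α(s+3) B_4 = 0 and 2α(s−2k+1) B_{2k−2} + (ν−4k²) B_{2k} + 2α(s+2k+1) B_{2k+2} = 0 for all k ≥ 2; moreover one may take B_{2n} = A_{2n} for all n > m. -/
/-!
For `s = 2m + 1` the subdiagonal coefficient `a (m + 1)` vanishes, so both recurrences split into
a finite block on the indices `≤ m` (the matrices `K⁰_m`, `K¹_m`) and a common tail. As
`det K⁰_m ≠ 0`, a nonzero even solution cannot vanish on its tail. As `det K¹_m ≠ 0`, the tail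
`(A n)_{n > m}` extends to an odd solution by solving `K¹_m x = -(c m * A (m + 1)) e_m`; this is a
finite modification of `A`, so it still decays exponentially.
-/

open Finset Matrix

section Tridiagonal

def tridiag (d u l : ℕ → ℝ) (N : ℕ) : Matrix (Fin N) (Fin N) ℝ :=
  Matrix.of fun i j =>
    if (i : ℕ) = j then d i else if (j : ℕ) = i + 1 then u i else if (i : ℕ) = j + 1 then l i else 0

def triRow (d u l y : ℕ → ℝ) (i : ℕ) : ℝ :=
  (if i = 0 then 0 else l i * y (i - 1)) + d i * y i + u i * y (i + 1)

variable {d u l : ℕ → ℝ} {N : ℕ}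

lemma tridiag_mulVec_apply (y : ℕ → ℝ) (i : Fin N) :
    (tridiag d u l N *ᵥ fun j => y j) i =
      triRow d u l y i - if (i : ℕ) + 1 = N then u i * y N else 0 := by
  have hterm : ∀ j : ℕ, (if (i : ℕ) = j then d i else if j = i + 1 then u i
      else if (i : ℕ) = j + 1 then l i else 0) * y j =
      (if j = i - 1 then (if (i : ℕ) = 0 then 0 else l i * y (i - 1)) else 0) +
        (if j = i then d i * y i else 0) + (if j = i + 1 then u i * y (i + 1) else 0) := by
    intro j
    split_ifs <;> subst_vars <;> first | omega | simp
  have hi := i.isLt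
  simp only [mulVec, dotProduct, tridiag, of_apply]
  rw [Fin.sum_univ_eq_sum_range (fun j => (if (i : ℕ) = j then d i else if j = i + 1 then u i
      else if (i : ℕ) = j + 1 then l i else 0) * y j), sum_congr rfl fun j _ => hterm j]
  simp only [sum_add_distrib, sum_ite_eq', mem_range, triRow]
  rw [if_pos (by omega : (i : ℕ) - 1 < N), if_pos hi]
  by_cases hN : (i : ℕ) + 1 < N
  · rw [if_pos hN, if_neg hN.ne]
    ring
  · obtain hN : (i : ℕ) + 1 = N := by omega
    rw [if_neg hN.not_lt, if_pos hN, hN]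
    ring

lemma exists_triRow_eq_zero_of_det_ne_zero (hdet : (tridiag d u l N).det ≠ 0) (z : ℕ → ℝ) :
    ∃ y : ℕ → ℝ, (∀ n, N ≤ n → y n = z n) ∧ ∀ i < N, triRow d u l y i = 0 := by
  have hunit : IsUnit (tridiag d u l N) :=
    (isUnit_iff_isUnit_det _).2 (isUnit_iff_ne_zero.2 hdet)
  -- the last row of the block also sees `y N = z N`; that term goes to the right-hand side
  obtain ⟨x, hx⟩ := mulVec_surjective_iff_isUnit.2 hunit
    fun i : Fin N => -if (i : ℕ) + 1 = N then u i * z N else 0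
  set y : ℕ → ℝ := fun n => if h : n < N then x ⟨n, h⟩ else z n
  have hyx : (fun j : Fin N => y j) = x := funext fun j => dif_pos j.isLt
  have hyN : y N = z N := dif_neg (lt_irrefl N)
  refine ⟨y, fun n hn => dif_neg hn.not_gt, fun i hi => ?_⟩
  have h := tridiag_mulVec_apply (d := d) (u := u) (l := l) y ⟨i, hi⟩
  rw [hyx, hx, hyN] at h
  linarith

lemma eq_zero_of_triRow_eq_zero (hdet : (tridiag d u l N).det ≠ 0) {y : ℕ → ℝ}
    (hrow : ∀ i < N, triRow d u l y i = 0) (hN : y N = 0) : ∀ n < N, y n = 0 := by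
  have hy : (tridiag d u l N *ᵥ fun j => y j) = 0 := by
    ext i
    simp [tridiag_mulVec_apply, hrow i i.isLt, hN]
  exact fun n hn => congr_fun (eq_zero_of_mulVec_eq_zero hdet hy) ⟨n, hn⟩

lemma exists_lt_ne_zero_of_triRow_eq_zero (hdet : (tridiag d u l (N + 1)).det ≠ 0)
    {y : ℕ → ℝ} (hrow : ∀ i ≤ N, triRow d u l y i = 0) (hy : ∃ n, y n ≠ 0) :
    ∃ n, N < n ∧ y n ≠ 0 := by
  by_contra! htail
  obtain ⟨n, hn⟩ := hy
  rcases lt_or_ge N n with hNn | hnN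
  · exact hn (htail n hNn)
  · exact hn (eq_zero_of_triRow_eq_zero hdet (fun i hi => hrow i (by omega))
      (htail _ N.lt_succ_self) n (by omega))

lemma triRow_succ {y : ℕ → ℝ} (hy : y 0 = 0) (i : ℕ) :
    triRow (fun n => d (n + 1)) (fun n => u (n + 1)) (fun n => l (n + 1)) (fun n => y (n + 1)) i
      = triRow d u l y (i + 1) := by
  rcases i with _ | i <;> simp [triRow, hy]

lemma triRow_congr_of_eq_of_lt {M : ℕ} (hl : l (M + 1) = 0) {y z : ℕ → ℝ}
    (hyz : ∀ n, M < n → y n = z n) {i : ℕ} (hi : M < i) :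
    triRow d u l y i = triRow d u l z i := by
  obtain rfl | hi := (Nat.succ_le_of_lt hi).eq_or_lt
  · simp [triRow, hl, hyz]
  · simp [triRow, hyz (i - 1) (by omega), hyz i (by omega), hyz (i + 1) (by omega)]

lemma exists_triRow_eq_zero_of_apply_zero
    (hdet : (tridiag (fun n => d (n + 1)) (fun n => u (n + 1)) (fun n => l (n + 1)) N).det ≠ 0)
    (hl : l (N + 1) = 0) {z : ℕ → ℝ} (hz : ∀ i, N < i → triRow d u l z i = 0) :
    ∃ y : ℕ → ℝ, y 0 = 0 ∧ (∀ n, N < n → y n = z n) ∧ ∀ i, 0 < i → triRow d u l y i = 0 := by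
  obtain ⟨x, hxz, hx⟩ := exists_triRow_eq_zero_of_det_ne_zero hdet fun n => z (n + 1)
  set y : ℕ → ℝ := fun n => if n = 0 then 0 else x (n - 1)
  have hyz : ∀ n, N < n → y n = z n := fun n hn => by
    simp [y, show n ≠ 0 by omega, hxz (n - 1) (by omega), show n - 1 + 1 = n by omega]
  refine ⟨y, rfl, hyz, fun i hi => ?_⟩
  obtain ⟨i, rfl⟩ := Nat.exists_eq_add_of_lt hi
  by_cases hiN : i < N
  · rw [zero_add, ← triRow_succ rfl]
    simpa [y] using hx i hiN
  · rw [triRow_congr_of_eq_of_lt hl hyz (by omega)]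
    exact hz _ (by omega)

end Tridiagonal

lemma exists_pos_bound_pow_of_eq_of_lt {A B : ℕ → ℝ} {M : ℕ} (hBA : ∀ n, M < n → B n = A n)
    {C r : ℝ} (hr : 0 < r) (hA : ∀ n, |A n| ≤ C * r ^ n) :
    ∃ C' > 0, ∀ n, |B n| ≤ C' * r ^ n := by
  have hAO : A =O[Filter.atTop] (r ^ ·) := Asymptotics.IsBigO.of_bound C
    (Filter.Eventually.of_forall fun n => by simpa [abs_of_pos hr] using hA n)
  have hBO : B =O[Filter.atTop] (r ^ ·) := hAO.congr'
    ((Filter.eventually_gt_atTop M).mono fun n hn => (hBA n hn).symm) Filter.EventuallyEq.rfl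
  obtain ⟨C', hC', hB⟩ := Asymptotics.bound_of_isBigO_nat_atTop hBO
  exact ⟨C', hC', fun n => by simpa [abs_of_pos hr] using hB (pow_ne_zero n hr.ne')⟩

section WhittakerHill

variable {α ν s : ℝ} {a b c : ℕ → ℝ}

lemma whittakerHill_triRow_zero (hb : ∀ k : ℕ, b k = ν - 4 * (k : ℝ) ^ 2)
    (hc : ∀ k : ℕ, c k = 2 * α * (s + 2 * (k : ℝ) + 1)) (y : ℕ → ℝ) :
    triRow b c a y 0 = ν * y 0 + 2 * α * (s + 1) * y 1 := by
  rw [triRow, if_pos rfl, hb, hc]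
  push_cast
  ring

lemma whittakerHill_triRow_one (hb : ∀ k : ℕ, b k = ν - 4 * (k : ℝ) ^ 2)
    (hc : ∀ k : ℕ, c k = 2 * α * (s + 2 * (k : ℝ) + 1)) (ha1 : a 1 = 4 * α * (s - 1))
    (y : ℕ → ℝ) :
    triRow b c a y 1 = 4 * α * (s - 1) * y 0 + (ν - 4) * y 1 + 2 * α * (s + 3) * y 2 := by
  rw [triRow, if_neg one_ne_zero, ha1, hb, hc]
  push_cast
  ring

lemma whittakerHill_triRow_of_two_le (hb : ∀ k : ℕ, b k = ν - 4 * (k : ℝ) ^ 2)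
    (hc : ∀ k : ℕ, c k = 2 * α * (s + 2 * (k : ℝ) + 1))
    (ha : ∀ k : ℕ, 2 ≤ k → a k = 2 * α * (s - 2 * (k : ℝ) + 1)) (y : ℕ → ℝ) {k : ℕ}
    (hk : 2 ≤ k) :
    triRow b c a y k = 2 * α * (s - 2 * (k : ℝ) + 1) * y (k - 1) + (ν - 4 * (k : ℝ) ^ 2) * y k
        + 2 * α * (s + 2 * (k : ℝ) + 1) * y (k + 1) := by
  rw [triRow, if_neg (by omega), ha k hk, hb, hc]

end WhittakerHill

theorem whittaker_hill_coexistence_general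
    (m : ℕ) (α ν s : ℝ) (hs : s = 2 * (m : ℝ) + 1)
    (a b c : ℕ → ℝ)
    (hb : ∀ k : ℕ, b k = ν - 4 * (k : ℝ) ^ 2)
    (hc : ∀ k : ℕ, c k = 2 * α * (s + 2 * (k : ℝ) + 1))
    (ha1 : a 1 = 4 * α * (s - 1))
    (ha : ∀ k : ℕ, 2 ≤ k → a k = 2 * α * (s - 2 * (k : ℝ) + 1))
    (K0 : Matrix (Fin (m + 1)) (Fin (m + 1)) ℝ)
    (hK0 : ∀ i j : Fin (m + 1), K0 i j =
      if (i : ℕ) = (j : ℕ) then b (i : ℕ)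
      else if (j : ℕ) = (i : ℕ) + 1 then c (i : ℕ)
      else if (i : ℕ) = (j : ℕ) + 1 then a (i : ℕ)
      else 0)
    (K1 : Matrix (Fin m) (Fin m) ℝ)
    (hK1 : ∀ i j : Fin m, K1 i j =
      if (i : ℕ) = (j : ℕ) then b ((i : ℕ) + 1)
      else if (j : ℕ) = (i : ℕ) + 1 then c ((i : ℕ) + 1)
      else if (i : ℕ) = (j : ℕ) + 1 then a ((i : ℕ) + 1)
      else 0)
    (hdet0 : K0.det ≠ 0) (hdet1 : K1.det ≠ 0)
    (A : ℕ → ℝ)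
    (hA_ne : ∃ n : ℕ, A n ≠ 0)
    (hAdecay : ∃ C : ℝ, 0 < C ∧ ∃ r : ℝ, 0 < r ∧ r < 1 ∧ ∀ n : ℕ, |A n| ≤ C * r ^ n)
    (hA0 : ν * A 0 + 2 * α * (s + 1) * A 1 = 0)
    (hA1 : 4 * α * (s - 1) * A 0 + (ν - 4) * A 1 + 2 * α * (s + 3) * A 2 = 0)
    (hArec : ∀ k : ℕ, 2 ≤ k →
      2 * α * (s - 2 * (k : ℝ) + 1) * A (k - 1) + (ν - 4 * (k : ℝ) ^ 2) * A k
        + 2 * α * (s + 2 * (k : ℝ) + 1) * A (k + 1) = 0) :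
    ∃ B : ℕ → ℝ,
      (∃ n : ℕ, 1 ≤ n ∧ B n ≠ 0) ∧
      (∃ C : ℝ, 0 < C ∧ ∃ r : ℝ, 0 < r ∧ r < 1 ∧ ∀ n : ℕ, 1 ≤ n → |B n| ≤ C * r ^ n) ∧
      ((ν - 4) * B 1 + 2 * α * (s + 3) * B 2 = 0) ∧
      (∀ k : ℕ, 2 ≤ k →
        2 * α * (s - 2 * (k : ℝ) + 1) * B (k - 1) + (ν - 4 * (k : ℝ) ^ 2) * B k
          + 2 * α * (s + 2 * (k : ℝ) + 1) * B (k + 1) = 0) ∧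
      (∀ n : ℕ, m < n → B n = A n) := by
  have hK0' : K0 = tridiag b c a (m + 1) := Matrix.ext hK0
  have hK1' : K1 = tridiag (fun n => b (n + 1)) (fun n => c (n + 1)) (fun n => a (n + 1)) m :=
    Matrix.ext hK1
  have hdecouple : a (m + 1) = 0 := by
    rcases Nat.eq_zero_or_pos m with rfl | hm
    · simp [ha1, hs]
    · rw [ha _ (by omega), hs]
      push_cast
      ring
  have hArow : ∀ i, triRow b c a A i = 0 := by
    rintro (_ | _ | k)
    · rwa [whittakerHill_triRow_zero hb hc]
    · rwa [whittakerHill_triRow_one hb hc ha1]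
    · rw [whittakerHill_triRow_of_two_le hb hc ha _ (by omega)]
      exact hArec _ (by omega)
  obtain ⟨n, hmn, hAn⟩ :=
    exists_lt_ne_zero_of_triRow_eq_zero (hK0' ▸ hdet0) (fun i _ => hArow i) hA_ne
  obtain ⟨B, hB0, hBA, hBrow⟩ :=
    exists_triRow_eq_zero_of_apply_zero (hK1' ▸ hdet1) hdecouple (fun i _ => hArow i)
  obtain ⟨C, -, r, hr0, hr1, hA⟩ := hAdecay
  obtain ⟨C', hC', hB⟩ := exists_pos_bound_pow_of_eq_of_lt hBA hr0 hA
  refine ⟨B, ⟨n, by omega, hBA n hmn ▸ hAn⟩, ⟨C', hC', r, hr0, hr1, fun n _ => hB n⟩, ?_,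
    fun k hk => ?_, hBA⟩
  · simpa [whittakerHill_triRow_one hb hc ha1, hB0] using hBrow 1 one_pos
  · simpa [whittakerHill_triRow_of_two_le hb hc ha _ hk] using hBrow k (by omega)

/-- coexistence: for `s = 2m+1`, if `ν` avoids the spectra of the
finite tridiagonal blocks `K⁰_m` and `K¹_m`, then any nontrivial exponentially
decaying solution `(A n = A_{2n})` of the even recurrence is accompanied by a
nontrivial exponentially decaying solution `(B n = B_{2n})_{n≥1}` of the odd
recurrence, with `B n = A n` for `n > m`. -/
theorem whittaker_hill_coexistence
    (m : ℕ) (α ν s : ℝ) (hα : 0 < α) (hs : s = 2 * (m : ℝ) + 1)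
    (a b c : ℕ → ℝ)
    (hb : ∀ k : ℕ, b k = ν - 4 * (k : ℝ) ^ 2)
    (hc : ∀ k : ℕ, c k = 2 * α * (s + 2 * (k : ℝ) + 1))
    (ha1 : a 1 = 4 * α * (s - 1))
    (ha : ∀ k : ℕ, 2 ≤ k → a k = 2 * α * (s - 2 * (k : ℝ) + 1))
    (K0 : Matrix (Fin (m + 1)) (Fin (m + 1)) ℝ)
    (hK0 : ∀ i j : Fin (m + 1), K0 i j =
      if (i : ℕ) = (j : ℕ) then b (i : ℕ)
      else if (j : ℕ) = (i : ℕ) + 1 then c (i : ℕ)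
      else if (i : ℕ) = (j : ℕ) + 1 then a (i : ℕ)
      else 0)
    (K1 : Matrix (Fin m) (Fin m) ℝ)
    (hK1 : ∀ i j : Fin m, K1 i j =
      if (i : ℕ) = (j : ℕ) then b ((i : ℕ) + 1)
      else if (j : ℕ) = (i : ℕ) + 1 then c ((i : ℕ) + 1)
      else if (i : ℕ) = (j : ℕ) + 1 then a ((i : ℕ) + 1)
      else 0)
    (hdet0 : K0.det ≠ 0) (hdet1 : K1.det ≠ 0)
    (A : ℕ → ℝ)
    (hA_ne : ∃ n : ℕ, A n ≠ 0)
    (hAdecay : ∃ C : ℝ, 0 < C ∧ ∃ r : ℝ, 0 < r ∧ r < 1 ∧ ∀ n : ℕ, |A n| ≤ C * r ^ n)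
    (hA0 : ν * A 0 + 2 * α * (s + 1) * A 1 = 0)
    (hA1 : 4 * α * (s - 1) * A 0 + (ν - 4) * A 1 + 2 * α * (s + 3) * A 2 = 0)
    (hArec : ∀ k : ℕ, 2 ≤ k →
      2 * α * (s - 2 * (k : ℝ) + 1) * A (k - 1) + (ν - 4 * (k : ℝ) ^ 2) * A k
        + 2 * α * (s + 2 * (k : ℝ) + 1) * A (k + 1) = 0) :
    ∃ B : ℕ → ℝ,
      (∃ n : ℕ, 1 ≤ n ∧ B n ≠ 0) ∧
      (∃ C : ℝ, 0 < C ∧ ∃ r : ℝ, 0 < r ∧ r < 1 ∧ ∀ n : ℕ, 1 ≤ n → |B n| ≤ C * r ^ n) ∧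
      ((ν - 4) * B 1 + 2 * α * (s + 3) * B 2 = 0) ∧
      (∀ k : ℕ, 2 ≤ k →
        2 * α * (s - 2 * (k : ℝ) + 1) * B (k - 1) + (ν - 4 * (k : ℝ) ^ 2) * B k
          + 2 * α * (s + 2 * (k : ℝ) + 1) * B (k + 1) = 0) ∧
      (∀ n : ℕ, m < n → B n = A n) :=
  whittaker_hill_coexistence_general m α ν s hs a b c hb hc ha1 ha K0 hK0 K1 hK1 hdet0 hdet1 A hA_ne
    hAdecay hA0 hA1 hArec
end

section
/- Let (b_k)_{k≥0} be real numbers and (C_k)_{k≥2} strictly positive real numbers. Define polynomials Δ_0(λ) = 1, Δ_1(λ) = λ − b_0, and Δ_k(λ) = (λ − b_{k−1}) Δ_{k−1}(λ) − C_k Δ_{k−2}(λ) for k ≥ 2. Then for every k ≥ 0 and every real x, Δ_{k+1}′(x) Δ_k(x) − Δ_k′(x) Δ_{k+1}(x) > 0. -/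
/-!
The quantity in question is the Wronskian `W_k = W(Δ_k, Δ_{k+1})`. Differentiating the
three-term recurrence gives `W_{k+1} = Δ_{k+1}² + C_{k+2} W_k`, so starting from `W_0 = 1`
positivity propagates along the recurrence.
-/

open Polynomial

namespace Polynomial

theorem wronskian_X_sub_C_mul_sub_C_mul {R : Type*} [CommRing R] (p q : R[X]) (a c : R) :
    wronskian p ((X - C a) * p - C c * q) = p ^ 2 + C c * wronskian q p := by
  simp only [wronskian, derivative_sub, derivative_mul, derivative_X, derivative_C]
  ring

theorem eval_wronskian_pos_of_three_term {R : Type*} [CommRing R] [LinearOrder R]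
    [IsStrictOrderedRing R] {p q : R[X]} {a c x : R} (hc : 0 < c)
    (hqp : 0 < (wronskian q p).eval x) :
    0 < (wronskian p ((X - C a) * p - C c * q)).eval x := by
  rw [wronskian_X_sub_C_mul_sub_C_mul, eval_add, eval_mul, eval_C, eval_pow]
  exact add_pos_of_nonneg_of_pos (sq_nonneg _) (mul_pos hc hqp)

end Polynomial

/-- for the characteristic polynomials `Δ_k` of the nested Jacobi
submatrices (`Δ_0 = 1`, `Δ_1 = λ - b_0`, `Δ_k = (λ - b_{k-1}) Δ_{k-1} - C_k Δ_{k-2}`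
with `C_k > 0`), one has `Δ_{k+1}'(x) Δ_k(x) - Δ_k'(x) Δ_{k+1}(x) > 0` for all real `x`. -/
theorem jacobi_charpoly_wronskian_positive
    (b : ℕ → ℝ) (Cc : ℕ → ℝ) (hC : ∀ k : ℕ, 2 ≤ k → 0 < Cc k)
    (Δ : ℕ → Polynomial ℝ)
    (h0 : Δ 0 = 1)
    (h1 : Δ 1 = X - C (b 0))
    (hrec : ∀ k : ℕ, 2 ≤ k →
      Δ k = (X - C (b (k - 1))) * Δ (k - 1) - C (Cc k) * Δ (k - 2)) :
    ∀ (k : ℕ) (x : ℝ),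
      0 < (derivative (Δ (k + 1))).eval x * (Δ k).eval x
            - (derivative (Δ k)).eval x * (Δ (k + 1)).eval x := by
  intro k x
  suffices hW : 0 < (wronskian (Δ k) (Δ (k + 1))).eval x by
    simpa only [wronskian, eval_sub, eval_mul, mul_comm] using hW
  induction k with
  | zero => simp [h0, h1, wronskian]
  | succ n ih =>
    rw [hrec (n + 2) (by omega)]
    exact eval_wronskian_pos_of_three_term (hC (n + 2) (by omega)) ih
end

section
/- Let G₁, G₂ : [a,b] → ℝ be continuous with G₁(x) > G₂(x) for all x ∈ [a,b]. Let u, v : [a,b] → ℝ be twice continuously differentiable with u″(x) = G₁(x) u(x) and v″(x) = G₂(x) v(x) on [a,b], and suppose u is not identically zero and v is not identically zero. If x₁ < x₂ are consecutive zeros of u in [a,b] (that is, u(x₁) = u(x₂) = 0 and u(x) ≠ 0 for x₁ < x < x₂), then v has a zero in the open interval (x₁, x₂). -/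
/-!
Suppose `v` has no zero in `(x₁, x₂)`. Changing the signs of `u` and `v` if necessary, both are
positive there. The Wronskian `W = u' v - u v'` satisfies `W' = (G₁ - G₂) u v > 0`, so it is
strictly increasing on `[x₁, x₂]`. But `u` vanishes at both ends, so `W = u' v` there, and `u`
leaves `0` upwards at `x₁` and returns to it at `x₂`: `W x₁ ≥ 0 ≥ W x₂`.
-/

open Set

theorem IsPreconnected.forall_pos_or_forall_neg {X α : Type*} [TopologicalSpace X]
    [TopologicalSpace α] [LinearOrder α] [OrderClosedTopology α] [Zero α] {s : Set X}
    (hs : IsPreconnected s) {f : X → α} (hf : ContinuousOn f s)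
    (hf₀ : ∀ x ∈ s, f x ≠ 0) :
    (∀ x ∈ s, 0 < f x) ∨ (∀ x ∈ s, f x < 0) := by
  by_contra! ⟨⟨x, hx, hfx⟩, ⟨y, hy, hfy⟩⟩
  obtain ⟨z, hz, hfz⟩ := hs.intermediate_value hx hy hf ⟨hfx, hfy⟩
  exact hf₀ z hz hfz

theorem nonneg_Icc_of_pos_Ioo {f : ℝ → ℝ} {a b : ℝ} (hab : a < b)
    (hf : ContinuousOn f (Icc a b)) (hpos : ∀ x ∈ Ioo a b, 0 < f x) :
    ∀ x ∈ Icc a b, 0 ≤ f x := by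
  rw [← closure_Ioo hab.ne] at hf ⊢
  exact le_on_closure (fun x hx => (hpos x hx).le) continuousOn_const hf

theorem IsMinOn.hasDerivAt_nonneg_of_left {f : ℝ → ℝ} {a b f' : ℝ} (hab : a < b)
    (hmin : IsMinOn f (Icc a b) a) (hf : HasDerivAt f f' a) : 0 ≤ f' := by
  have hcone : b - a ∈ posTangentConeAt (Icc a b) a :=
    sub_mem_posTangentConeAt_of_segment_subset (segment_eq_Icc hab.le ▸ Subset.rfl)
  have := hmin.localize.hasFDerivWithinAt_nonneg hf.hasDerivWithinAt hcone
  rw [ContinuousLinearMap.toSpanSingleton_apply, smul_eq_mul] at this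
  exact nonneg_of_mul_nonneg_right this (sub_pos.2 hab)

theorem IsMinOn.hasDerivAt_nonpos_of_right {f : ℝ → ℝ} {a b f' : ℝ} (hab : a < b)
    (hmin : IsMinOn f (Icc a b) b) (hf : HasDerivAt f f' b) : f' ≤ 0 := by
  have hcone : a - b ∈ posTangentConeAt (Icc a b) b :=
    sub_mem_posTangentConeAt_of_segment_subset (by rw [segment_symm, segment_eq_Icc hab.le])
  have := hmin.localize.hasFDerivWithinAt_nonneg hf.hasDerivWithinAt hcone
  rw [ContinuousLinearMap.toSpanSingleton_apply, smul_eq_mul] at this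
  exact nonpos_of_mul_nonneg_right this (sub_neg.2 hab)

theorem hasDerivAt_wronskian {u u' v v' : ℝ → ℝ} {x p q : ℝ} (hu : HasDerivAt u (u' x) x)
    (hu' : HasDerivAt u' (p * u x) x) (hv : HasDerivAt v (v' x) x)
    (hv' : HasDerivAt v' (q * v x) x) :
    HasDerivAt (fun y => u' y * v y - u y * v' y) ((p - q) * (u x * v x)) x :=
  ((hu'.mul hv).sub (hu.mul hv')).congr_deriv (by ring)

section Sturm

variable {G₁ G₂ u u' v v' : ℝ → ℝ} {x₁ x₂ : ℝ}

theorem sturm_comparison_Icc_of_pos (h12 : x₁ < x₂)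
    (hGG : ∀ x ∈ Ioo x₁ x₂, G₂ x < G₁ x)
    (hu' : ∀ x ∈ Icc x₁ x₂, HasDerivAt u (u' x) x)
    (hu'' : ∀ x ∈ Icc x₁ x₂, HasDerivAt u' (G₁ x * u x) x)
    (hv' : ∀ x ∈ Icc x₁ x₂, HasDerivAt v (v' x) x)
    (hv'' : ∀ x ∈ Icc x₁ x₂, HasDerivAt v' (G₂ x * v x) x)
    (hu1 : u x₁ = 0) (hu2 : u x₂ = 0) (hu : ∀ x ∈ Ioo x₁ x₂, 0 < u x) :
    ¬ ∀ x ∈ Ioo x₁ x₂, 0 < v x := by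
  intro hv
  set W : ℝ → ℝ := fun y => u' y * v y - u y * v' y
  have hW : ∀ x ∈ Icc x₁ x₂, HasDerivAt W ((G₁ x - G₂ x) * (u x * v x)) x := fun x hx =>
    hasDerivAt_wronskian (hu' x hx) (hu'' x hx) (hv' x hx) (hv'' x hx)
  have hW_pos : ∀ x ∈ Ioo x₁ x₂, 0 < (G₁ x - G₂ x) * (u x * v x) := fun x hx =>
    mul_pos (sub_pos.2 (hGG x hx)) (mul_pos (hu x hx) (hv x hx))
  have hW_mono : StrictMonoOn W (Icc x₁ x₂) :=
    strictMonoOn_of_hasDerivWithinAt_pos (convex_Icc _ _)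
      (fun x hx => (hW x hx).continuousAt.continuousWithinAt)
      (fun x hx => (hW x (interior_subset hx)).hasDerivWithinAt)
      (fun x hx => hW_pos x (by rwa [interior_Icc] at hx))
  have hu_nonneg := nonneg_Icc_of_pos_Ioo h12
    (fun x hx => (hu' x hx).continuousAt.continuousWithinAt) hu
  have hv_nonneg := nonneg_Icc_of_pos_Ioo h12
    (fun x hx => (hv' x hx).continuousAt.continuousWithinAt) hv
  have hx₁ : x₁ ∈ Icc x₁ x₂ := left_mem_Icc.2 h12.le
  have hx₂ : x₂ ∈ Icc x₁ x₂ := right_mem_Icc.2 h12.le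
  have hu'₁ : 0 ≤ u' x₁ :=
    IsMinOn.hasDerivAt_nonneg_of_left h12 (fun x hx => hu1 ▸ hu_nonneg x hx) (hu' x₁ hx₁)
  have hu'₂ : u' x₂ ≤ 0 :=
    IsMinOn.hasDerivAt_nonpos_of_right h12 (fun x hx => hu2 ▸ hu_nonneg x hx) (hu' x₂ hx₂)
  have hW₁ : 0 ≤ W x₁ := by
    simpa only [W, hu1, zero_mul, sub_zero] using mul_nonneg hu'₁ (hv_nonneg x₁ hx₁)
  have hW₂ : W x₂ ≤ 0 := by
    simpa only [W, hu2, zero_mul, sub_zero] using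
      mul_nonpos_of_nonpos_of_nonneg hu'₂ (hv_nonneg x₂ hx₂)
  exact (hW_mono hx₁ hx₂ h12).not_ge (hW₂.trans hW₁)

theorem sturm_comparison_Icc (h12 : x₁ < x₂)
    (hGG : ∀ x ∈ Ioo x₁ x₂, G₂ x < G₁ x)
    (hu' : ∀ x ∈ Icc x₁ x₂, HasDerivAt u (u' x) x)
    (hu'' : ∀ x ∈ Icc x₁ x₂, HasDerivAt u' (G₁ x * u x) x)
    (hv' : ∀ x ∈ Icc x₁ x₂, HasDerivAt v (v' x) x)
    (hv'' : ∀ x ∈ Icc x₁ x₂, HasDerivAt v' (G₂ x * v x) x)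
    (hu1 : u x₁ = 0) (hu2 : u x₂ = 0) (hu : ∀ x ∈ Ioo x₁ x₂, u x ≠ 0) :
    ∃ x ∈ Ioo x₁ x₂, v x = 0 := by
  by_contra! hv
  have pos_of_not_pos {f f' : ℝ → ℝ} (hf : ∀ x ∈ Icc x₁ x₂, HasDerivAt f (f' x) x)
      (hf₀ : ∀ x ∈ Ioo x₁ x₂, f x ≠ 0) (hf_pos : ¬ ∀ x ∈ Ioo x₁ x₂, 0 < f x) :
      ∀ x ∈ Ioo x₁ x₂, 0 < -f x := fun x hx =>
    neg_pos.2 <| (isPreconnected_Ioo.forall_pos_or_forall_neg (fun y hy =>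
      (hf y (Ioo_subset_Icc_self hy)).continuousAt.continuousWithinAt) hf₀).resolve_left
      hf_pos x hx
  wlog hu_pos : ∀ x ∈ Ioo x₁ x₂, 0 < u x generalizing u u'
  · refine this (u := -u) (u' := -u') (fun x hx => (hu' x hx).neg)
      (fun x hx => by simpa only [Pi.neg_apply, mul_neg] using (hu'' x hx).neg)
      (by simp [hu1]) (by simp [hu2]) (by simpa using hu) (pos_of_not_pos hu' hu hu_pos)
  wlog hv_pos : ∀ x ∈ Ioo x₁ x₂, 0 < v x generalizing v v'
  · refine this (v := -v) (v' := -v') (fun x hx => (hv' x hx).neg)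
      (fun x hx => by simpa only [Pi.neg_apply, mul_neg] using (hv'' x hx).neg)
      (by simpa using hv) (pos_of_not_pos hv' hv hv_pos)
  exact sturm_comparison_Icc_of_pos h12 hGG hu' hu'' hv' hv'' hu1 hu2 hu_pos hv_pos

end Sturm

theorem sturm_comparison_general
    (a b : ℝ) (G₁ G₂ : ℝ → ℝ)
    (hGG : ∀ x ∈ Set.Icc a b, G₂ x < G₁ x)
    (u v u' v' : ℝ → ℝ)
    (hu' : ∀ x ∈ Set.Icc a b, HasDerivAt u (u' x) x)
    (hu'' : ∀ x ∈ Set.Icc a b, HasDerivAt u' (G₁ x * u x) x)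
    (hv' : ∀ x ∈ Set.Icc a b, HasDerivAt v (v' x) x)
    (hv'' : ∀ x ∈ Set.Icc a b, HasDerivAt v' (G₂ x * v x) x)
    (x₁ x₂ : ℝ) (hx₁ : x₁ ∈ Set.Icc a b) (hx₂ : x₂ ∈ Set.Icc a b) (h12 : x₁ < x₂)
    (hu1 : u x₁ = 0) (hu2 : u x₂ = 0)
    (hcons : ∀ x : ℝ, x₁ < x → x < x₂ → u x ≠ 0) :
    ∃ x : ℝ, x₁ < x ∧ x < x₂ ∧ v x = 0 := by
  have hsub : Icc x₁ x₂ ⊆ Icc a b := Icc_subset_Icc hx₁.1 hx₂.2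
  obtain ⟨x, ⟨hx₁x, hxx₂⟩, hvx⟩ := sturm_comparison_Icc h12
    (fun x hx => hGG x (hsub (Ioo_subset_Icc_self hx)))
    (fun x hx => hu' x (hsub hx)) (fun x hx => hu'' x (hsub hx))
    (fun x hx => hv' x (hsub hx)) (fun x hx => hv'' x (hsub hx))
    hu1 hu2 (fun x hx => hcons x hx.1 hx.2)
  exact ⟨x, hx₁x, hxx₂, hvx⟩

/-- Sturm's comparison theorem: if `u'' = G₁ u` and `v'' = G₂ v` on
`[a,b]` with `G₁ > G₂` continuous on `[a,b]`, `u` and `v` not identically zero, and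
`x₁ < x₂` are consecutive zeros of `u` in `[a,b]`, then `v` vanishes somewhere in
the open interval `(x₁, x₂)`. -/
theorem sturm_comparison
    (a b : ℝ) (hab : a ≤ b) (G₁ G₂ : ℝ → ℝ)
    (hG₁ : ContinuousOn G₁ (Set.Icc a b)) (hG₂ : ContinuousOn G₂ (Set.Icc a b))
    (hGG : ∀ x ∈ Set.Icc a b, G₂ x < G₁ x)
    (u v u' v' : ℝ → ℝ)
    (hu' : ∀ x ∈ Set.Icc a b, HasDerivAt u (u' x) x)
    (hu'' : ∀ x ∈ Set.Icc a b, HasDerivAt u' (G₁ x * u x) x)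
    (hv' : ∀ x ∈ Set.Icc a b, HasDerivAt v (v' x) x)
    (hv'' : ∀ x ∈ Set.Icc a b, HasDerivAt v' (G₂ x * v x) x)
    (hu_ne : ∃ x ∈ Set.Icc a b, u x ≠ 0)
    (hv_ne : ∃ x ∈ Set.Icc a b, v x ≠ 0)
    (x₁ x₂ : ℝ) (hx₁ : x₁ ∈ Set.Icc a b) (hx₂ : x₂ ∈ Set.Icc a b) (h12 : x₁ < x₂)
    (hu1 : u x₁ = 0) (hu2 : u x₂ = 0)
    (hcons : ∀ x : ℝ, x₁ < x → x < x₂ → u x ≠ 0) :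
    ∃ x : ℝ, x₁ < x ∧ x < x₂ ∧ v x = 0 :=
  sturm_comparison_general a b G₁ G₂ hGG u v u' v' hu' hu'' hv' hv'' x₁ x₂ hx₁ hx₂ h12 hu1 hu2 hcons
end

section
/- Let u : ℝ → ℝ be smooth, κ₁ and λ real numbers, ψ₁ : ℝ → ℝ a smooth solution of −ψ₁″ + u ψ₁ = κ₁ ψ₁ with ψ₁(x) ≠ 0 for all x, and ψ : ℝ → ℝ a smooth solution of −ψ″ + u ψ = λ ψ. Define ũ = u − 2 (ψ₁′/ψ₁)′ and ψ̃ = (ψ′ ψ₁ − ψ ψ₁′)/ψ₁. Then −ψ̃″ + ũ ψ̃ = λ ψ̃ on ℝ. -/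
/-- Crum formula, one step: if `ψ₁` is a nonvanishing smooth solution
of `-ψ₁'' + u ψ₁ = κ₁ ψ₁` and `ψ` any smooth solution of `-ψ'' + u ψ = λ ψ`, then
`ψ̃ = (ψ' ψ₁ - ψ ψ₁')/ψ₁` satisfies `-ψ̃'' + ũ ψ̃ = λ ψ̃` with
`ũ = u - 2 (ψ₁'/ψ₁)'`. -/
theorem darboux_crum_one_step
    (u : ℝ → ℝ) (hu : ContDiff ℝ (⊤ : ℕ∞) u) (κ₁ lam : ℝ)
    (ψ₁ : ℝ → ℝ) (hψ₁ : ContDiff ℝ (⊤ : ℕ∞) ψ₁) (hne : ∀ x : ℝ, ψ₁ x ≠ 0)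
    (heq₁ : ∀ x : ℝ, -deriv (deriv ψ₁) x + u x * ψ₁ x = κ₁ * ψ₁ x)
    (ψ : ℝ → ℝ) (hψ : ContDiff ℝ (⊤ : ℕ∞) ψ)
    (heq : ∀ x : ℝ, -deriv (deriv ψ) x + u x * ψ x = lam * ψ x) :
    ∀ x : ℝ,
      -deriv (deriv fun y => (deriv ψ y * ψ₁ y - ψ y * deriv ψ₁ y) / ψ₁ y) x
        + (u x - 2 * deriv (fun y => deriv ψ₁ y / ψ₁ y) x)
          * ((deriv ψ x * ψ₁ x - ψ x * deriv ψ₁ x) / ψ₁ x)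
      = lam * ((deriv ψ x * ψ₁ x - ψ x * deriv ψ₁ x) / ψ₁ x) := by
  intro x
  have hψd : Differentiable ℝ ψ := hψ.differentiable (by simp)
  have hψ₁d : Differentiable ℝ ψ₁ := hψ₁.differentiable (by simp)
  have hψ'd : Differentiable ℝ (deriv ψ) :=
    (contDiff_infty_iff_deriv.mp (hψ.of_le (by simp))).2.differentiable (by simp)
  have hψ₁'d : Differentiable ℝ (deriv ψ₁) :=
    (contDiff_infty_iff_deriv.mp (hψ₁.of_le (by simp))).2.differentiable (by simp)
  -- second derivatives
  have hdd : ∀ y, HasDerivAt (deriv ψ) (u y * ψ y - lam * ψ y) y := by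
    intro y
    have h := (hψ'd y).hasDerivAt
    have : deriv (deriv ψ) y = u y * ψ y - lam * ψ y := by linarith [heq y]
    rwa [this] at h
  have hdd₁ : ∀ y, HasDerivAt (deriv ψ₁) (u y * ψ₁ y - κ₁ * ψ₁ y) y := by
    intro y
    have h := (hψ₁'d y).hasDerivAt
    have : deriv (deriv ψ₁) y = u y * ψ₁ y - κ₁ * ψ₁ y := by linarith [heq₁ y]
    rwa [this] at h
  -- first derivative of ψ̃
  set g : ℝ → ℝ := fun y =>
    (κ₁ - lam) * ψ y -
      (deriv ψ y * ψ₁ y - ψ y * deriv ψ₁ y) * deriv ψ₁ y / (ψ₁ y) ^ 2 with hg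
  have hW : ∀ y, HasDerivAt (fun z => deriv ψ z * ψ₁ z - ψ z * deriv ψ₁ z)
      ((κ₁ - lam) * (ψ y * ψ₁ y)) y := by
    intro y
    have h := (((hdd y).mul (hψ₁d y).hasDerivAt).sub
      (((hψd y).hasDerivAt).mul (hdd₁ y)))
    refine h.congr_deriv ?_
    ring
  have hkey : ∀ y, HasDerivAt (fun z => (deriv ψ z * ψ₁ z - ψ z * deriv ψ₁ z) / ψ₁ z)
      (g y) y := by
    intro y
    have h := (hW y).div (hψ₁d y).hasDerivAt (hne y)
    refine h.congr_deriv ?_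
    rw [hg]
    field_simp [hg, hne y]
  have hderiv1 : deriv (fun z => (deriv ψ z * ψ₁ z - ψ z * deriv ψ₁ z) / ψ₁ z) = g := by
    funext y; exact (hkey y).deriv
  -- second derivative of ψ̃
  have hg' : HasDerivAt g
      ((κ₁ - lam) * deriv ψ x -
        (((κ₁ - lam) * (ψ x * ψ₁ x) * deriv ψ₁ x +
            (deriv ψ x * ψ₁ x - ψ x * deriv ψ₁ x) * (u x * ψ₁ x - κ₁ * ψ₁ x)) * (ψ₁ x) ^ 2
          - (deriv ψ x * ψ₁ x - ψ x * deriv ψ₁ x) * deriv ψ₁ x *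
            (2 * ψ₁ x * deriv ψ₁ x)) / ((ψ₁ x) ^ 2) ^ 2) x := by
    have hden : HasDerivAt (fun z => (ψ₁ z) ^ 2) (2 * ψ₁ x * deriv ψ₁ x) x := by
      have := ((hψ₁d x).hasDerivAt).pow 2
      refine this.congr_deriv ?_
      ring
    have hnum : HasDerivAt (fun z => (deriv ψ z * ψ₁ z - ψ z * deriv ψ₁ z) * deriv ψ₁ z)
        ((κ₁ - lam) * (ψ x * ψ₁ x) * deriv ψ₁ x +
          (deriv ψ x * ψ₁ x - ψ x * deriv ψ₁ x) * (u x * ψ₁ x - κ₁ * ψ₁ x)) x :=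
      (hW x).mul (hdd₁ x)
    exact ((HasDerivAt.const_mul (κ₁ - lam) (hψd x).hasDerivAt).sub
      (hnum.div hden (pow_ne_zero 2 (hne x))))
  have h2 : deriv (deriv fun y => (deriv ψ y * ψ₁ y - ψ y * deriv ψ₁ y) / ψ₁ y) x =
      (κ₁ - lam) * deriv ψ x -
        (((κ₁ - lam) * (ψ x * ψ₁ x) * deriv ψ₁ x +
            (deriv ψ x * ψ₁ x - ψ x * deriv ψ₁ x) * (u x * ψ₁ x - κ₁ * ψ₁ x)) * (ψ₁ x) ^ 2
          - (deriv ψ x * ψ₁ x - ψ x * deriv ψ₁ x) * deriv ψ₁ x *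
            (2 * ψ₁ x * deriv ψ₁ x)) / ((ψ₁ x) ^ 2) ^ 2 := by
    rw [hderiv1]; exact hg'.deriv
  -- derivative of ψ₁'/ψ₁
  have h3 : deriv (fun y => deriv ψ₁ y / ψ₁ y) x =
      ((u x * ψ₁ x - κ₁ * ψ₁ x) * ψ₁ x - deriv ψ₁ x * deriv ψ₁ x) / (ψ₁ x) ^ 2 :=
    ((hdd₁ x).div (hψ₁d x).hasDerivAt (hne x)).deriv
  rw [h2, h3]
  field_simp [hne x]
  ring
end

section
/- Let u : ℝ → ℝ be smooth, κ₁, κ₂ real numbers, and ψ₁, ψ₂ : ℝ → ℝ smooth solutions of −ψᵢ″ + u ψᵢ = κᵢ ψᵢ (i = 1,2) such that the Wronskian W = ψ₁ ψ₂′ − ψ₂ ψ₁′ satisfies W(x) ≠ 0 for all x ∈ ℝ. Define the twice-Darboux-transformed potential ũ = u − 2 (W′/W)′. Then the function ψ₂/W satisfies −(ψ₂/W)″ + ũ (ψ₂/W) = κ₁ (ψ₂/W), and the function ψ₁/W satisfies −(ψ₁/W)″ + ũ (ψ₁/W) = κ₂ (ψ₁/W) on ℝ. -/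
private lemma darboux_key (u ψ W : ℝ → ℝ) (κ μ : ℝ)
    (hψd : Differentiable ℝ ψ) (hWd : Differentiable ℝ W)
    (hψ'd : Differentiable ℝ (deriv ψ)) (hW'd : Differentiable ℝ (deriv W))
    (hWne : ∀ x, W x ≠ 0)
    (h1 : ∀ x, deriv (deriv ψ) x = (u x - μ) * ψ x)
    (h2 : ∀ x, 2 * deriv ψ x * deriv W x - ψ x * deriv (deriv W) x
      = (κ - μ) * ψ x * W x) :
    ∀ x, -deriv (deriv fun y => ψ y / W y) x
      + (u x - 2 * deriv (fun y => deriv W y / W y) x) * (ψ x / W x)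
      = κ * (ψ x / W x) := by
  intro x
  have hdφ : deriv (fun y => ψ y / W y)
      = fun y => (deriv ψ y * W y - ψ y * deriv W y) / (W y) ^ 2 :=
    funext fun y => deriv_div (hψd y) (hWd y) (hWne y)
  have hN : Differentiable ℝ (fun y => deriv ψ y * W y - ψ y * deriv W y) :=
    (hψ'd.mul hWd).sub (hψd.mul hW'd)
  have hD : Differentiable ℝ (fun y => (W y) ^ 2) := hWd.pow 2
  have hW2ne : (W x) ^ 2 ≠ 0 := pow_ne_zero 2 (hWne x)
  have hderivN : deriv (fun y => deriv ψ y * W y - ψ y * deriv W y) x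
      = deriv (deriv ψ) x * W x + deriv ψ x * deriv W x
        - (deriv ψ x * deriv W x + ψ x * deriv (deriv W) x) := by
    rw [deriv_fun_sub (hψ'd.fun_mul hWd).differentiableAt (hψd.fun_mul hW'd).differentiableAt,
      deriv_fun_mul (hψ'd x) (hWd x), deriv_fun_mul (hψd x) (hW'd x)]
  have hderivD : deriv (fun y => (W y) ^ 2) x = 2 * W x * deriv W x := by
    rw [deriv_fun_pow (hWd x) 2]; ring
  have hd2φ : deriv (deriv fun y => ψ y / W y) x
      = ((deriv (deriv ψ) x * W x - ψ x * deriv (deriv W) x) * (W x) ^ 2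
        - (deriv ψ x * W x - ψ x * deriv W x) * (2 * W x * deriv W x)) / ((W x) ^ 2) ^ 2 := by
    rw [hdφ, deriv_fun_div (hN x) (hD x) hW2ne, hderivN, hderivD]
    ring_nf
  have hdq : deriv (fun y => deriv W y / W y) x
      = (deriv (deriv W) x * W x - deriv W x * deriv W x) / (W x) ^ 2 :=
    deriv_div (hW'd x) (hWd x) (hWne x)
  rw [hd2φ, hdq]
  have h1x := h1 x
  have h2x := h2 x
  have hx := hWne x
  field_simp
  linear_combination (-(W x) ^ 2) * h1x + (W x) * h2x

/-- two-step Darboux transformation: if `ψ₁, ψ₂` are smooth solutions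
of `-ψᵢ'' + u ψᵢ = κᵢ ψᵢ` whose Wronskian `W = ψ₁ ψ₂' - ψ₂ ψ₁'` never vanishes, then
for `ũ = u - 2 (W'/W)'` the functions `ψ₂/W` and `ψ₁/W` satisfy
`-φ'' + ũ φ = κ₁ φ` and `-φ'' + ũ φ = κ₂ φ` respectively. -/
theorem darboux_two_step_eigenfunctions
    (u : ℝ → ℝ) (hu : ContDiff ℝ (⊤ : ℕ∞) u) (κ₁ κ₂ : ℝ)
    (ψ₁ ψ₂ : ℝ → ℝ) (hψ₁ : ContDiff ℝ (⊤ : ℕ∞) ψ₁) (hψ₂ : ContDiff ℝ (⊤ : ℕ∞) ψ₂)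
    (heq₁ : ∀ x : ℝ, -deriv (deriv ψ₁) x + u x * ψ₁ x = κ₁ * ψ₁ x)
    (heq₂ : ∀ x : ℝ, -deriv (deriv ψ₂) x + u x * ψ₂ x = κ₂ * ψ₂ x)
    (W : ℝ → ℝ) (hW : ∀ x : ℝ, W x = ψ₁ x * deriv ψ₂ x - ψ₂ x * deriv ψ₁ x)
    (hWne : ∀ x : ℝ, W x ≠ 0) :
    (∀ x : ℝ,
      -deriv (deriv fun y => ψ₂ y / W y) x
        + (u x - 2 * deriv (fun y => deriv W y / W y) x) * (ψ₂ x / W x)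
      = κ₁ * (ψ₂ x / W x)) ∧
    (∀ x : ℝ,
      -deriv (deriv fun y => ψ₁ y / W y) x
        + (u x - 2 * deriv (fun y => deriv W y / W y) x) * (ψ₁ x / W x)
      = κ₂ * (ψ₁ x / W x)) := by
  have hψ₁' : ContDiff ℝ (↑(⊤ : ℕ∞)) (deriv ψ₁) :=
    (contDiff_infty_iff_deriv.mp (hψ₁.of_le (by simp))).2
  have hψ₂' : ContDiff ℝ (↑(⊤ : ℕ∞)) (deriv ψ₂) :=
    (contDiff_infty_iff_deriv.mp (hψ₂.of_le (by simp))).2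
  have hψ₁d : Differentiable ℝ ψ₁ := hψ₁.differentiable (by simp)
  have hψ₂d : Differentiable ℝ ψ₂ := hψ₂.differentiable (by simp)
  have hψ₁'d : Differentiable ℝ (deriv ψ₁) := hψ₁'.differentiable (by simp)
  have hψ₂'d : Differentiable ℝ (deriv ψ₂) := hψ₂'.differentiable (by simp)
  have hWeq : W = fun x => ψ₁ x * deriv ψ₂ x - ψ₂ x * deriv ψ₁ x := funext hW
  have hWc : ContDiff ℝ (↑(⊤ : ℕ∞)) W := by
    rw [hWeq]
    exact ((hψ₁.of_le (by simp)).mul hψ₂').sub ((hψ₂.of_le (by simp)).mul hψ₁')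
  have hWd : Differentiable ℝ W := hWc.differentiable (by simp)
  have hW'd : Differentiable ℝ (deriv W) :=
    ((contDiff_infty_iff_deriv.mp hWc).2).differentiable (by simp)
  have h1₁ : ∀ x, deriv (deriv ψ₁) x = (u x - κ₁) * ψ₁ x := by
    intro x; have := heq₁ x; linarith [heq₁ x, mul_comm (u x) (ψ₁ x)]
  have h1₂ : ∀ x, deriv (deriv ψ₂) x = (u x - κ₂) * ψ₂ x := by
    intro x; have := heq₂ x; nlinarith [heq₂ x]
  have hW'eq : deriv W = fun x => (κ₁ - κ₂) * (ψ₁ x * ψ₂ x) := by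
    funext x
    rw [hWeq]
    rw [deriv_fun_sub (hψ₁d.fun_mul hψ₂'d).differentiableAt (hψ₂d.fun_mul hψ₁'d).differentiableAt,
      deriv_fun_mul (hψ₁d x) (hψ₂'d x), deriv_fun_mul (hψ₂d x) (hψ₁'d x), h1₁ x, h1₂ x]
    ring
  have hW'' : ∀ x, deriv (deriv W) x
      = (κ₁ - κ₂) * (deriv ψ₁ x * ψ₂ x + ψ₁ x * deriv ψ₂ x) := by
    intro x
    rw [hW'eq, deriv_const_mul _ (hψ₁d.fun_mul hψ₂d).differentiableAt,
      deriv_fun_mul (hψ₁d x) (hψ₂d x)]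
  have h2₁ : ∀ x, 2 * deriv ψ₂ x * deriv W x - ψ₂ x * deriv (deriv W) x
      = (κ₁ - κ₂) * ψ₂ x * W x := by
    intro x
    rw [hW'' x, hW x]
    have : deriv W x = (κ₁ - κ₂) * (ψ₁ x * ψ₂ x) := by rw [hW'eq]
    rw [this]; ring
  have h2₂ : ∀ x, 2 * deriv ψ₁ x * deriv W x - ψ₁ x * deriv (deriv W) x
      = (κ₂ - κ₁) * ψ₁ x * W x := by
    intro x
    rw [hW'' x, hW x]
    have : deriv W x = (κ₁ - κ₂) * (ψ₁ x * ψ₂ x) := by rw [hW'eq]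
    rw [this]; ring
  exact ⟨darboux_key u ψ₂ W κ₁ κ₂ hψ₂d hWd hψ₂'d hW'd hWne h1₂ h2₁,
    darboux_key u ψ₁ W κ₂ κ₁ hψ₁d hWd hψ₁'d hW'd hWne h1₁ h2₂⟩
end

section
/- Let α be a real number and ν a real number satisfying (ν − 1 + 8α)(ν − 9) = 48α². Then the function φ(x) = (ν − 9) cos x − 4α cos 3x satisfies φ″ − 4α sin(2x) φ′ + (ν + 12α cos 2x) φ = 0 on ℝ; equivalently, φ is an eigenfunction of K = −d²/dx² + 4α sin(2x) d/dx − 12α cos 2x with eigenvalue ν. Consequently ψ(x) = φ(x) e^{α cos 2x} satisfies the Whittaker–Hill equation −ψ″ − (16α cos 2x + 2α² cos 4x) ψ = (ν − 2α²) ψ. -/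
/-!
Conjugating by the gauge factor `e^{α cos 2x}` turns `whittakerHillOp α s` into
`gaugedWhittakerHillOp α s - 2α²`: the `α²` terms combine through `sin² 2x = (1 - cos 4x)/2`.
For `s = 4` the `cos 5x` terms produced from `cos 3x` cancel, so the gauged operator preserves the
span of `cos x, cos 3x`, acting there by the matrix `[[1 - 8α, -12α], [-4α, 9]]`; the vector
`(ν - 9, -4α)` is a `ν`-eigenvector of it exactly when `(ν - 1 + 8α)(ν - 9) = 48α²`.
-/

open Real

noncomputable def whittakerHillOp (α s : ℝ) (ψ : ℝ → ℝ) (x : ℝ) : ℝ :=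
  -deriv (deriv ψ) x - (4 * α * s * cos (2 * x) + 2 * α ^ 2 * cos (4 * x)) * ψ x

noncomputable def gaugedWhittakerHillOp (α s : ℝ) (φ : ℝ → ℝ) (x : ℝ) : ℝ :=
  -deriv (deriv φ) x + 4 * α * sin (2 * x) * deriv φ x - 4 * (s - 1) * α * cos (2 * x) * φ x

theorem hasDerivAt_cos_mul (c x : ℝ) :
    HasDerivAt (fun y => cos (c * y)) (-(c * sin (c * x))) x := by
  simpa [mul_comm] using ((hasDerivAt_id x).const_mul c).cos

theorem hasDerivAt_sin_mul (c x : ℝ) :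
    HasDerivAt (fun y => sin (c * y)) (c * cos (c * x)) x := by
  simpa [mul_comm] using ((hasDerivAt_id x).const_mul c).sin

theorem deriv_mul_exp {φ g : ℝ → ℝ} {x : ℝ} (hφ : DifferentiableAt ℝ φ x)
    (hg : DifferentiableAt ℝ g x) :
    deriv (fun y => φ y * exp (g y)) x = (deriv φ x + deriv g x * φ x) * exp (g x) := by
  rw [deriv_fun_mul hφ hg.exp, deriv_exp hg]
  ring

theorem deriv_deriv_mul_exp {φ g : ℝ → ℝ} (hφ : ContDiff ℝ 2 φ) (hg : ContDiff ℝ 2 g) (x : ℝ) :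
    deriv (deriv fun y => φ y * exp (g y)) x =
      (deriv (deriv φ) x + 2 * deriv g x * deriv φ x
        + (deriv (deriv g) x + deriv g x ^ 2) * φ x) * exp (g x) := by
  have hφ1 := hφ.differentiable two_ne_zero
  have hg1 := hg.differentiable two_ne_zero
  have hφ2 := hφ.differentiable_deriv_two
  have hg2 := hg.differentiable_deriv_two
  have hderiv : deriv (fun y => φ y * exp (g y)) =
      fun y => (deriv φ y + deriv g y * φ y) * exp (g y) :=
    funext fun y => deriv_mul_exp (hφ1 y) (hg1 y)
  rw [hderiv, deriv_mul_exp (φ := fun y => deriv φ y + deriv g y * φ y) (by fun_prop) (hg1 x),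
    deriv_fun_add (hφ2 x) ((hg2 x).fun_mul (hφ1 x)), deriv_fun_mul (hg2 x) (hφ1 x)]
  ring

theorem whittakerHillOp_mul_exp (α s : ℝ) {φ : ℝ → ℝ} (hφ : ContDiff ℝ 2 φ) (x : ℝ) :
    whittakerHillOp α s (fun y => φ y * exp (α * cos (2 * y))) x =
      exp (α * cos (2 * x)) * (gaugedWhittakerHillOp α s φ x - 2 * α ^ 2 * φ x) := by
  have hg' : deriv (fun y => α * cos (2 * y)) = fun y => α * -(2 * sin (2 * y)) :=
    funext fun y => ((hasDerivAt_cos_mul 2 y).const_mul α).deriv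
  have hg'' : deriv (fun y => α * -(2 * sin (2 * y))) x = α * -(2 * (2 * cos (2 * x))) :=
    (((hasDerivAt_sin_mul 2 x).const_mul 2).neg.const_mul α).deriv
  have hcos_four : cos (4 * x) = 2 * cos (2 * x) ^ 2 - 1 := by
    rw [show 4 * x = 2 * (2 * x) by ring, cos_two_mul]
  unfold whittakerHillOp gaugedWhittakerHillOp
  rw [deriv_deriv_mul_exp hφ (by fun_prop) x, hg', hg'']
  linear_combination (-4 * α ^ 2 * φ x * exp (α * cos (2 * x))) * sin_sq (2 * x)
    + (-2 * α ^ 2 * φ x * exp (α * cos (2 * x))) * hcos_four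

theorem gaugedWhittakerHillOp_four_cos_add_cos_three_mul (α a b x : ℝ) :
    gaugedWhittakerHillOp α 4 (fun y => a * cos y + b * cos (3 * y)) x =
      ((1 - 8 * α) * a - 12 * α * b) * cos x + (9 * b - 4 * α * a) * cos (3 * x) := by
  have h1 : deriv (fun y => a * cos y + b * cos (3 * y)) =
      fun y => a * -sin y + b * -(3 * sin (3 * y)) :=
    funext fun y => (((hasDerivAt_cos y).const_mul a).add ((hasDerivAt_cos_mul 3 y).const_mul b)).deriv
  have h2 : deriv (fun y => a * -sin y + b * -(3 * sin (3 * y))) x =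
      a * -cos x + b * -(3 * (3 * cos (3 * x))) :=
    (((hasDerivAt_sin x).neg.const_mul a).add
      (((hasDerivAt_sin_mul 3 x).const_mul 3).neg.const_mul b)).deriv
  unfold gaugedWhittakerHillOp
  rw [h1, h2]
  beta_reduce
  rw [cos_three_mul, sin_three_mul, sin_two_mul, cos_two_mul]
  linear_combination
    α * cos x * (-8 * a - 72 * b + 96 * b * (sin x ^ 2 + 1 - cos x ^ 2)) * sin_sq x

theorem gaugedWhittakerHillOp_four_eigenfunction {α ν : ℝ}
    (hν : (ν - 1 + 8 * α) * (ν - 9) = 48 * α ^ 2) (x : ℝ) :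
    gaugedWhittakerHillOp α 4 (fun y => (ν - 9) * cos y - 4 * α * cos (3 * y)) x =
      ν * ((ν - 9) * cos x - 4 * α * cos (3 * x)) := by
  have hφ : (fun y => (ν - 9) * cos y - 4 * α * cos (3 * y)) =
      fun y => (ν - 9) * cos y + -4 * α * cos (3 * y) :=
    funext fun y => by ring
  rw [hφ, gaugedWhittakerHillOp_four_cos_add_cos_three_mul]
  linear_combination -cos x * hν

/-- for `s = 4`, if `(ν - 1 + 8α)(ν - 9) = 48α²` then
`φ(x) = (ν - 9) cos x - 4α cos 3x` is an eigenfunction of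
`K = -d²/dx² + 4α sin(2x) d/dx - 12α cos 2x` with eigenvalue `ν`, and consequently
`ψ = φ e^{α cos 2x}` solves the Whittaker–Hill equation with `λ = ν - 2α²`. -/
theorem whittaker_hill_s_four_antiperiodic_eigenfunction
    (α ν : ℝ) (hν : (ν - 1 + 8 * α) * (ν - 9) = 48 * α ^ 2)
    (φ : ℝ → ℝ) (hφ : ∀ x : ℝ, φ x = (ν - 9) * Real.cos x - 4 * α * Real.cos (3 * x))
    (ψ : ℝ → ℝ) (hψ : ∀ x : ℝ, ψ x = φ x * Real.exp (α * Real.cos (2 * x))) :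
    (∀ x : ℝ,
      deriv (deriv φ) x - 4 * α * Real.sin (2 * x) * deriv φ x
        + (ν + 12 * α * Real.cos (2 * x)) * φ x = 0) ∧
    (∀ x : ℝ,
      -deriv (deriv ψ) x
        - (16 * α * Real.cos (2 * x) + 2 * α ^ 2 * Real.cos (4 * x)) * ψ x
      = (ν - 2 * α ^ 2) * ψ x) := by
  obtain rfl : ψ = fun x => φ x * exp (α * cos (2 * x)) := funext hψ
  obtain rfl : φ = fun x => (ν - 9) * cos x - 4 * α * cos (3 * x) := funext hφ
  have hK := gaugedWhittakerHillOp_four_eigenfunction hν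
  refine ⟨fun x => ?_, fun x => ?_⟩
  · have := hK x
    unfold gaugedWhittakerHillOp at this
    linear_combination -this
  · have hL := whittakerHillOp_mul_exp α 4 (φ := fun x => (ν - 9) * cos x - 4 * α * cos (3 * x))
      (by fun_prop) x
    rw [hK x] at hL
    unfold whittakerHillOp at hL
    linear_combination hL
end

section
/- Let α > 0 and set C = (√(1 + 16α²) − 1)/(4α). Then the function ψ₀(x) = (1 + C cos 2x) e^{α cos 2x} satisfies the Whittaker–Hill equation with s = 3: −ψ₀″ − (12α cos 2x + 2α² cos 4x) ψ₀ = λ₀ ψ₀ on ℝ, where λ₀ = 2(1 − √(1 + 16α²)) − 2α². -/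
/-! Writing `ψ = φ · e^{α cos 2x}` conjugates the Whittaker–Hill operator into
`-φ'' + 4α sin 2x · φ' + (4α(1 - s) cos 2x - 2α²) φ`, the `cos 4x` terms cancelling because
`(2α sin 2x)² = 2α²(1 - cos 4x)`. For `s = 3` this operator maps `1 + C cos 2x` to
`-2α²(1 + C cos 2x) - 8αC - (8α - 4C) cos 2x`, an eigenfunction with eigenvalue `-8αC - 2α²`
exactly when `2αC² + C = 2α`; the positive root of this quadratic is the `C` of the theorem,
and `4αC = √(1 + 16α²) - 1` turns the eigenvalue into `λ₀`. -/

open Real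

noncomputable def whittakerHill (α s : ℝ) (ψ : ℝ → ℝ) (x : ℝ) : ℝ :=
  -deriv (deriv ψ) x - (4 * α * s * cos (2 * x) + 2 * α ^ 2 * cos (4 * x)) * ψ x

lemma hasDerivAt_cos_two_mul (x : ℝ) :
    HasDerivAt (fun x => cos (2 * x)) (-2 * sin (2 * x)) x := by
  simpa [mul_comm] using ((hasDerivAt_id x).const_mul 2).cos

lemma hasDerivAt_sin_two_mul (x : ℝ) :
    HasDerivAt (fun x => sin (2 * x)) (2 * cos (2 * x)) x := by
  simpa [mul_comm] using ((hasDerivAt_id x).const_mul 2).sin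

lemma deriv_deriv_mul_exp_s18 {φ φ' φ'' w w' w'' : ℝ → ℝ}
    (hφ : ∀ x, HasDerivAt φ (φ' x) x) (hφ' : ∀ x, HasDerivAt φ' (φ'' x) x)
    (hw : ∀ x, HasDerivAt w (w' x) x) (hw' : ∀ x, HasDerivAt w' (w'' x) x) (x : ℝ) :
    deriv (deriv fun x => φ x * exp (w x)) x =
      (φ'' x + 2 * w' x * φ' x + (w'' x + w' x ^ 2) * φ x) * exp (w x) := by
  have hd : deriv (fun x => φ x * exp (w x)) = fun x => (φ' x + w' x * φ x) * exp (w x) := by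
    funext x
    convert ((hφ x).fun_mul (hw x).exp).deriv using 1
    ring
  rw [hd]
  convert (((hφ' x).fun_add ((hw' x).fun_mul (hφ x))).fun_mul (hw x).exp).deriv using 1
  ring

lemma whittakerHill_mul_exp {φ φ' φ'' : ℝ → ℝ}
    (hφ : ∀ x, HasDerivAt φ (φ' x) x) (hφ' : ∀ x, HasDerivAt φ' (φ'' x) x) (α s x : ℝ) :
    whittakerHill α s (fun x => φ x * exp (α * cos (2 * x))) x =
      (-φ'' x + 4 * α * sin (2 * x) * φ' x + (4 * α * (1 - s) * cos (2 * x) - 2 * α ^ 2) * φ x)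
        * exp (α * cos (2 * x)) := by
  have hw (x : ℝ) := (hasDerivAt_cos_two_mul x).const_mul α
  have hw' (x : ℝ) := ((hasDerivAt_sin_two_mul x).const_mul (-2)).const_mul α
  have hcos_four : cos (4 * x) = 1 - 2 * sin (2 * x) ^ 2 := by
    rw [show 4 * x = 2 * (2 * x) by ring, cos_two_mul, cos_sq']
    ring
  rw [whittakerHill, deriv_deriv_mul_exp_s18 hφ hφ' hw hw', hcos_four]
  ring

lemma whittakerHill_three_eigenfunction {α C : ℝ} (hC : 2 * α * C ^ 2 + C = 2 * α) (x : ℝ) :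
    whittakerHill α 3 (fun x => (1 + C * cos (2 * x)) * exp (α * cos (2 * x))) x =
      (-8 * α * C - 2 * α ^ 2) * ((1 + C * cos (2 * x)) * exp (α * cos (2 * x))) := by
  have hφ (x : ℝ) := ((hasDerivAt_cos_two_mul x).const_mul C).const_add 1
  have hφ' (x : ℝ) := ((hasDerivAt_sin_two_mul x).const_mul (-2)).const_mul C
  rw [whittakerHill_mul_exp hφ hφ']
  linear_combination (4 * cos (2 * x) * exp (α * cos (2 * x))) * hC
    - (8 * α * C * exp (α * cos (2 * x))) * sin_sq_add_cos_sq (2 * x)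

lemma sqrt_one_add_sixteen_mul_sq {α C : ℝ} (hα : α ≠ 0)
    (hC : C = (√(1 + 16 * α ^ 2) - 1) / (4 * α)) :
    √(1 + 16 * α ^ 2) = 4 * α * C + 1 := by
  rw [hC]
  field_simp
  ring

lemma quadratic_of_sqrt_eq {α C : ℝ} (hα : α ≠ 0) (h : √(1 + 16 * α ^ 2) = 4 * α * C + 1) :
    2 * α * C ^ 2 + C = 2 * α := by
  have hsq : (4 * α * C + 1) ^ 2 = 1 + 16 * α ^ 2 := by
    rw [← h, sq_sqrt (by positivity)]
  have : 8 * α * (2 * α * C ^ 2 + C - 2 * α) = 0 := by linear_combination hsq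
  linarith [(mul_eq_zero.mp this).resolve_left (by positivity)]

/-- for `s = 3` the Whittaker–Hill operator has the explicit ground
state `ψ₀(x) = (1 + C cos 2x) e^{α cos 2x}`, `C = (√(1+16α²) - 1)/(4α)`, with
eigenvalue `λ₀ = 2(1 - √(1+16α²)) - 2α²`. -/
theorem whittaker_hill_s_three_ground_state
    (α : ℝ) (hα : 0 < α)
    (C : ℝ) (hC : C = (Real.sqrt (1 + 16 * α ^ 2) - 1) / (4 * α))
    (ψ₀ : ℝ → ℝ)
    (hψ₀ : ∀ x : ℝ, ψ₀ x = (1 + C * Real.cos (2 * x)) * Real.exp (α * Real.cos (2 * x)))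
    (lam₀ : ℝ) (hlam₀ : lam₀ = 2 * (1 - Real.sqrt (1 + 16 * α ^ 2)) - 2 * α ^ 2) :
    ∀ x : ℝ,
      -deriv (deriv ψ₀) x
        - (12 * α * Real.cos (2 * x) + 2 * α ^ 2 * Real.cos (4 * x)) * ψ₀ x
      = lam₀ * ψ₀ x := by
  intro x
  have hsqrt := sqrt_one_add_sixteen_mul_sq hα.ne' hC
  have h := whittakerHill_three_eigenfunction (quadratic_of_sqrt_eq hα.ne' hsqrt) x
  rw [whittakerHill, ← funext hψ₀, ← hψ₀] at h
  rw [hlam₀, hsqrt]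
  linear_combination h
end

section
/- Let α > 0 and set C = (√(1 + 16α²) − 1)/(4α). Then 0 < C < 1, so that 1 + C cos 2x > 0 for all x ∈ ℝ and the potential v₀(x) = −4α cos 2x − 2α² cos 4x + 8C(C + cos 2x)/(1 + C cos 2x)² is a smooth π-periodic function on ℝ. Moreover, the function ψ̃₀(x) = e^{−α cos 2x}/(1 + C cos 2x) satisfies −ψ̃₀″ + v₀ ψ̃₀ = λ₀ ψ̃₀ on ℝ, where λ₀ = 2(1 − √(1 + 16α²)) − 2α². -/
private lemma wh_d1 (α C : ℝ) (hD : ∀ x : ℝ, (1 + C * Real.cos (2*x)) ≠ 0) (x : ℝ) :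
    HasDerivAt (fun y => Real.exp (-(α * Real.cos (2*y))) / (1 + C * Real.cos (2*y)))
      (Real.exp (-(α * Real.cos (2*x))) * Real.sin (2*x)
        * (2*α*(1 + C*Real.cos (2*x)) + 2*C) / (1 + C*Real.cos (2*x))^2) x := by
  have h2x : HasDerivAt (fun y : ℝ => 2*y) 2 x := by
    simpa using (hasDerivAt_id x).const_mul 2
  have hc : HasDerivAt (fun y => Real.cos (2*y)) (-(Real.sin (2*x)) * 2) x :=
    (Real.hasDerivAt_cos (2*x)).comp x h2x
  have hE : HasDerivAt (fun y => Real.exp (-(α * Real.cos (2*y))))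
      (Real.exp (-(α * Real.cos (2*x))) * (-(α * (-(Real.sin (2*x)) * 2)))) x :=
    (Real.hasDerivAt_exp _).comp x ((hc.const_mul α).neg)
  have hDd : HasDerivAt (fun y => 1 + C * Real.cos (2*y)) (C * (-(Real.sin (2*x)) * 2)) x :=
    (hc.const_mul C).const_add 1
  have := hE.div hDd (hD x)
  refine this.congr_deriv ?_
  field_simp
  ring

private lemma wh_d2 (α C : ℝ) (hD : ∀ x : ℝ, (1 + C * Real.cos (2*x)) ≠ 0) (x : ℝ) :
    HasDerivAt (fun y => Real.exp (-(α * Real.cos (2*y))) * Real.sin (2*y)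
        * (2*α*(1 + C*Real.cos (2*y)) + 2*C) / (1 + C*Real.cos (2*y))^2)
      (Real.exp (-(α * Real.cos (2*x))) *
        ((2*α*Real.sin (2*x)^2*(2*α*(1 + C*Real.cos (2*x)) + 2*C)
          + 2*Real.cos (2*x)*(2*α*(1 + C*Real.cos (2*x)) + 2*C)
          - 4*α*C*Real.sin (2*x)^2) * (1 + C*Real.cos (2*x))
         + 4*C*Real.sin (2*x)^2*(2*α*(1 + C*Real.cos (2*x)) + 2*C))
        / (1 + C*Real.cos (2*x))^3) x := by
  have h2x : HasDerivAt (fun y : ℝ => 2*y) 2 x := by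
    simpa using (hasDerivAt_id x).const_mul 2
  have hc : HasDerivAt (fun y => Real.cos (2*y)) (-(Real.sin (2*x)) * 2) x :=
    (Real.hasDerivAt_cos (2*x)).comp x h2x
  have hs : HasDerivAt (fun y => Real.sin (2*y)) (Real.cos (2*x) * 2) x :=
    (Real.hasDerivAt_sin (2*x)).comp x h2x
  have hE : HasDerivAt (fun y => Real.exp (-(α * Real.cos (2*y))))
      (Real.exp (-(α * Real.cos (2*x))) * (-(α * (-(Real.sin (2*x)) * 2)))) x :=
    (Real.hasDerivAt_exp _).comp x ((hc.const_mul α).neg)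
  have hDd : HasDerivAt (fun y => 1 + C * Real.cos (2*y)) (C * (-(Real.sin (2*x)) * 2)) x :=
    (hc.const_mul C).const_add 1
  have hT : HasDerivAt (fun y => 2*α*(1 + C*Real.cos (2*y)) + 2*C)
      (2*α*(C * (-(Real.sin (2*x)) * 2))) x := (hDd.const_mul (2*α)).add_const (2*C)
  have hN := (hE.mul hs).mul hT
  have hD2 : HasDerivAt (fun y => (1 + C*Real.cos (2*y))^2)
      (2 * (1 + C*Real.cos (2*x))^1 * (C * (-(Real.sin (2*x)) * 2))) x := hDd.pow 2
  have := hN.div hD2 (pow_ne_zero 2 (hD x))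
  refine this.congr_deriv ?_
  have hx := hD x
  simp only [Pi.mul_apply]
  field_simp
  ring

/-- with `C = (√(1+16α²) - 1)/(4α)` one has `0 < C < 1`, so
`1 + C cos 2x > 0` everywhere and the Darboux-transformed potential
`v₀ = -4α cos 2x - 2α² cos 4x + 8C(C + cos 2x)/(1 + C cos 2x)²` is a smooth
π-periodic function; moreover `ψ̃₀ = e^{-α cos 2x}/(1 + C cos 2x)` satisfies
`-ψ̃₀'' + v₀ ψ̃₀ = λ₀ ψ̃₀` with `λ₀ = 2(1 - √(1+16α²)) - 2α²`. -/
theorem darboux_transformed_whittaker_hill_s_three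
    (α : ℝ) (hα : 0 < α)
    (C : ℝ) (hC : C = (Real.sqrt (1 + 16 * α ^ 2) - 1) / (4 * α))
    (v₀ : ℝ → ℝ)
    (hv₀ : ∀ x : ℝ, v₀ x = -(4 * α) * Real.cos (2 * x) - 2 * α ^ 2 * Real.cos (4 * x)
      + 8 * C * (C + Real.cos (2 * x)) / (1 + C * Real.cos (2 * x)) ^ 2)
    (ψ : ℝ → ℝ)
    (hψ : ∀ x : ℝ, ψ x = Real.exp (-(α * Real.cos (2 * x))) / (1 + C * Real.cos (2 * x)))
    (lam₀ : ℝ) (hlam₀ : lam₀ = 2 * (1 - Real.sqrt (1 + 16 * α ^ 2)) - 2 * α ^ 2) :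
    0 < C ∧ C < 1 ∧
    (∀ x : ℝ, 0 < 1 + C * Real.cos (2 * x)) ∧
    ContDiff ℝ (⊤ : ℕ∞) v₀ ∧
    Function.Periodic v₀ Real.pi ∧
    (∀ x : ℝ, -deriv (deriv ψ) x + v₀ x * ψ x = lam₀ * ψ x) := by
  have hsnn : (0:ℝ) ≤ 1 + 16 * α ^ 2 := by positivity
  have hsq2 := Real.sq_sqrt hsnn
  have hsnneg := Real.sqrt_nonneg (1 + 16 * α ^ 2)
  have h1lt : 1 < Real.sqrt (1 + 16 * α ^ 2) := by nlinarith
  have hC0 : 0 < C := by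
    rw [hC]; exact div_pos (by linarith) (by positivity)
  have hsq : Real.sqrt (1 + 16 * α ^ 2) = 4 * α * C + 1 := by
    rw [hC]; field_simp; ring
  rw [hsq] at hsq2
  have hrel : 2 * α * C ^ 2 + C = 2 * α := by
    have h8 : 8 * α * (2 * α * C ^ 2 + C - 2 * α) = 0 := by linear_combination hsq2
    have := mul_eq_zero.mp h8
    rcases this with h | h
    · nlinarith
    · linarith
  have hC1 : C < 1 := by nlinarith
  have hpos : ∀ x : ℝ, 0 < 1 + C * Real.cos (2 * x) := by
    intro x
    nlinarith [Real.neg_one_le_cos (2 * x), Real.cos_le_one (2 * x)]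
  have hDne : ∀ x : ℝ, (1 + C * Real.cos (2 * x)) ≠ 0 := fun x => (hpos x).ne'
  have hcos2 : ContDiff ℝ (⊤ : ℕ∞) fun x : ℝ => Real.cos (2 * x) :=
    Real.contDiff_cos.comp (contDiff_const.mul contDiff_id)
  have hcos4 : ContDiff ℝ (⊤ : ℕ∞) fun x : ℝ => Real.cos (4 * x) :=
    Real.contDiff_cos.comp (contDiff_const.mul contDiff_id)
  refine ⟨hC0, hC1, hpos, ?_, ?_, ?_⟩
  · have hv : v₀ = fun x => -(4 * α) * Real.cos (2 * x) - 2 * α ^ 2 * Real.cos (4 * x)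
        + 8 * C * (C + Real.cos (2 * x)) / (1 + C * Real.cos (2 * x)) ^ 2 := funext hv₀
    rw [hv]
    refine ContDiff.add (ContDiff.sub (contDiff_const.mul hcos2) (contDiff_const.mul hcos4))
      (ContDiff.div (contDiff_const.mul (contDiff_const.add hcos2))
        ((contDiff_const.add (contDiff_const.mul hcos2)).pow 2)
        fun x => pow_ne_zero 2 (hDne x))
  · intro x
    have e2 : 2 * (x + Real.pi) = 2 * x + 2 * Real.pi := by ring
    have e4 : 4 * (x + Real.pi) = 4 * x + 2 * Real.pi + 2 * Real.pi := by ring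
    rw [hv₀, hv₀, e2, e4, Real.cos_add_two_pi, Real.cos_add_two_pi, Real.cos_add_two_pi]
  · intro x
    have hψe : ψ = fun y => Real.exp (-(α * Real.cos (2 * y))) / (1 + C * Real.cos (2 * y)) :=
      funext hψ
    have hd1 : deriv ψ = fun y => Real.exp (-(α * Real.cos (2*y))) * Real.sin (2*y)
        * (2*α*(1 + C*Real.cos (2*y)) + 2*C) / (1 + C*Real.cos (2*y))^2 := by
      funext y
      rw [hψe]
      exact (wh_d1 α C hDne y).deriv
    have hd2 : deriv (deriv ψ) x = Real.exp (-(α * Real.cos (2*x))) *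
        ((2*α*Real.sin (2*x)^2*(2*α*(1 + C*Real.cos (2*x)) + 2*C)
          + 2*Real.cos (2*x)*(2*α*(1 + C*Real.cos (2*x)) + 2*C)
          - 4*α*C*Real.sin (2*x)^2) * (1 + C*Real.cos (2*x))
         + 4*C*Real.sin (2*x)^2*(2*α*(1 + C*Real.cos (2*x)) + 2*C))
        / (1 + C*Real.cos (2*x))^3 := by
      rw [hd1]
      exact (wh_d2 α C hDne x).deriv
    have hlam : lam₀ = -(8*α*C) - 2*α^2 := by rw [hlam₀, hsq]; ring
    have hc4 : Real.cos (4*x) = 2 * Real.cos (2*x)^2 - 1 := by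
      rw [show (4:ℝ)*x = 2*(2*x) by ring, Real.cos_two_mul]
    have hs2 : Real.sin (2*x)^2 = 1 - Real.cos (2*x)^2 := by
      nlinarith [Real.sin_sq_add_cos_sq (2*x)]
    rw [hd2, hv₀, hψ, hlam, hc4, hs2]
    have hx := hDne x
    set c := Real.cos (2*x) with hcdef
    set E := Real.exp (-(α * c)) with hEdef
    have hx2 : 1 + c * C ≠ 0 := by rwa [mul_comm]
    field_simp
    linear_combination (4*c*E*(1+c*C)) * hrel
end
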